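/- arXiv:2005.03167 — 6 statements merged into one kernel-verified Lean document; each statement's English description precedes it below -/
import Mathlib

section
/- Let q > 1 and let M^q be the q-Gevrey sequence q^{p²}. Let (a_j)_{j≥1} be a strictly increasing sequence of positive integers with sup_j (a_{j+1} − a_j) < ∞ and (a_{j+1} − a_j)(a_{j+1} − a_j − 1) > log 2 / log q for all j. Then there are constants K ≥ b > 2 with b ≤ min{A_{M^q}(a_j,a_{j+1}), B_{M^q}(a_j,a_{j+1})} and max{A_{M^q}(a_j,a_{j+1}), B_{M^q}(a_j,a_{j+1})} ≤ K for all j. -/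
noncomputable def quot (M : ℕ → ℝ) (p : ℕ) : ℝ := M p / M (p - 1)

noncomputable def Amu (μ : ℕ → ℝ) (a b : ℕ) : ℝ :=
  μ (b + 1) ^ (b - a) / ∏ i ∈ Finset.Icc (a + 1) b, μ i

noncomputable def Bmu (μ : ℕ → ℝ) (a b : ℕ) : ℝ :=
  (∏ i ∈ Finset.Icc (a + 1) b, μ i) / μ (a + 1) ^ (b - a)

lemma quot_eq (q : ℝ) (hq : 0 < q) (p : ℕ) (hp : 1 ≤ p) :
    quot (fun p => q ^ (p ^ 2)) p = q ^ (2 * p - 1) := by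
  obtain ⟨k, rfl⟩ := Nat.exists_eq_add_of_le hp
  simp only [quot]
  have h1 : 1 + k - 1 = k := by omega
  rw [h1, div_eq_mul_inv, ← pow_sub₀ q (ne_of_gt hq) (Nat.pow_le_pow_left (by omega) 2)]
  congr 1
  have h2 : (1 + k) ^ 2 = k ^ 2 + 2 * k + 1 := by ring
  omega

lemma sum_two (a d : ℕ) :
    ∑ i ∈ Finset.Icc (a + 1) (a + d), (2 * i - 1) = d * (2 * a + d) := by
  induction d with
  | zero => simp
  | succ e ih =>
    rw [show a + (e + 1) = (a + e) + 1 by ring,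
      Finset.sum_Icc_succ_top (by omega), ih]
    have h : 2 * ((a + e) + 1) - 1 = 2 * a + 2 * e + 1 := by omega
    rw [h]; ring

lemma prod_quot (q : ℝ) (hq : 0 < q) (a d : ℕ) :
    ∏ i ∈ Finset.Icc (a + 1) (a + d), quot (fun p => q ^ (p ^ 2)) i
      = q ^ (d * (2 * a + d)) := by
  rw [← sum_two a d, ← Finset.prod_pow_eq_pow_sum]
  apply Finset.prod_congr rfl
  intro i hi
  simp only [Finset.mem_Icc] at hi
  rw [quot_eq q hq i (by omega)]

lemma AB (q : ℝ) (hq : 1 < q) (a e : ℕ) :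
    Amu (quot (fun p => q ^ (p ^ 2))) a (a + (e + 1)) = q ^ ((e + 1) * (e + 2)) ∧
    Bmu (quot (fun p => q ^ (p ^ 2))) a (a + (e + 1)) = q ^ ((e + 1) * e) := by
  have hq0 : 0 < q := lt_trans one_pos hq
  have hd : a + (e + 1) - a = e + 1 := by omega
  constructor
  · rw [Amu, hd, prod_quot q hq0, quot_eq q hq0 _ (by omega), ← pow_mul]
    rw [show (2 * (a + (e + 1) + 1) - 1) * (e + 1)
        = (e + 1) * (2 * a + (e + 1)) + (e + 1) * (e + 2) by
      have h : 2 * (a + (e + 1) + 1) - 1 = 2 * a + 2 * e + 3 := by omega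
      rw [h]; ring]
    rw [pow_add, mul_div_cancel_left₀ _ (by positivity)]
  · rw [Bmu, hd, prod_quot q hq0, quot_eq q hq0 _ (by omega), ← pow_mul]
    rw [show (e + 1) * (2 * a + (e + 1))
        = (2 * (a + 1) - 1) * (e + 1) + (e + 1) * e by
      have h : 2 * (a + 1) - 1 = 2 * a + 1 := by omega
      rw [h]; ring]
    rw [pow_add, mul_div_cancel_left₀ _ (by positivity)]

theorem stmt13 (q : ℝ) (hq : 1 < q) (a : ℕ → ℕ) (ha : StrictMono a) (hapos : ∀ j, 1 ≤ a j)
    (hbdd : ∃ C : ℕ, ∀ j, a (j + 1) - a j ≤ C)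
    (hlow : ∀ j, Real.log 2 / Real.log q <
      ((a (j + 1) - a j : ℕ) : ℝ) * ((a (j + 1) - a j - 1 : ℕ) : ℝ)) :
    ∃ b K : ℝ, 2 < b ∧ b ≤ K ∧ ∀ j,
      b ≤ min (Amu (quot (fun p => q ^ (p ^ 2))) (a j) (a (j + 1)))
              (Bmu (quot (fun p => q ^ (p ^ 2))) (a j) (a (j + 1))) ∧
      max (Amu (quot (fun p => q ^ (p ^ 2))) (a j) (a (j + 1)))
          (Bmu (quot (fun p => q ^ (p ^ 2))) (a j) (a (j + 1))) ≤ K := by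
  have hq0 : 0 < q := lt_trans one_pos hq
  obtain ⟨C, hC⟩ := hbdd
  have hlogq : 0 < Real.log q := Real.log_pos hq
  have key : ∀ j, ∃ e : ℕ, a (j + 1) = a j + (e + 1) ∧ e + 1 ≤ C ∧
      (2 : ℝ) < q ^ ((e + 1) * e) := by
    intro j
    have h1 : a j < a (j + 1) := ha (Nat.lt_succ_self j)
    refine ⟨a (j + 1) - a j - 1, by omega, by have := hC j; omega, ?_⟩
    have hl := hlow j
    have he1 : a (j + 1) - a j = (a (j + 1) - a j - 1) + 1 := by omega
    set e := a (j + 1) - a j - 1 with hedef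
    rw [he1] at hl
    have hl2 : Real.log 2 < (((e + 1) * e : ℕ) : ℝ) * Real.log q := by
      rw [div_lt_iff₀ hlogq] at hl
      push_cast at hl ⊢
      nlinarith
    rw [← Real.log_pow] at hl2
    exact (Real.log_lt_log_iff (by positivity) (by positivity)).mp hl2
  have hex : ∃ n : ℕ, (2 : ℝ) < q ^ n := by
    obtain ⟨e, _, _, h⟩ := key 0
    exact ⟨(e + 1) * e, h⟩
  set n₀ := Nat.find hex with hn₀def
  refine ⟨q ^ n₀, q ^ (C * (C + 1)), Nat.find_spec hex, ?_, ?_⟩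
  · apply pow_le_pow_right₀ hq.le
    obtain ⟨e, _, heC, h⟩ := key 0
    calc n₀ ≤ (e + 1) * e := Nat.find_min' hex h
      _ ≤ C * (C + 1) := Nat.mul_le_mul heC (by omega)
  · intro j
    obtain ⟨e, hae, heC, h⟩ := key j
    rw [hae, (AB q hq (a j) e).1, (AB q hq (a j) e).2]
    have hB : n₀ ≤ (e + 1) * e := Nat.find_min' hex h
    have hA : n₀ ≤ (e + 1) * (e + 2) := by
      refine Nat.find_min' hex ?_
      exact lt_of_lt_of_le h (pow_le_pow_right₀ hq.le (Nat.mul_le_mul_left _ (by omega)))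
    constructor
    · exact le_min (pow_le_pow_right₀ hq.le hA) (pow_le_pow_right₀ hq.le hB)
    · refine max_le (pow_le_pow_right₀ hq.le ?_) (pow_le_pow_right₀ hq.le ?_)
      · exact Nat.mul_le_mul heC (by omega)
      · exact Nat.mul_le_mul heC (by omega)
end

section
/- Let M ∈ 𝓛𝓒 with δ_p := log(μ_p/μ_{p−1}) and sup_p δ_p < ∞. If a strictly increasing sequence of positive integers (a_j)_j satisfies the regularity condition (b) (i.e., there exist K ≥ b > 2 with b ≤ min{A_M(a_j,a_{j+1}), B_M(a_j,a_{j+1})} and max ≤ K for all j), then sup_{j≥1} δ_{a_{j+1}+1}·(a_{j+1} − a_j) < +∞. -/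
theorem stmt15 (M : ℕ → ℝ) (hpos : ∀ j, 0 < M j) (h0 : M 0 = 1) (hnorm : 1 ≤ M 1)
    (hlc : ∀ j : ℕ, 1 ≤ j → (M j) ^ 2 ≤ M (j - 1) * M (j + 1))
    (hroot : Filter.Tendsto (fun j : ℕ => (M j) ^ (1 / (j : ℝ))) Filter.atTop Filter.atTop)
    (δ : ℕ → ℝ) (hδ : ∀ p, 1 ≤ p → δ p = Real.log (quot M p / quot M (p - 1)))
    (hsup : ∃ S : ℝ, ∀ p, 1 ≤ p → δ p ≤ S)
    (a : ℕ → ℕ) (ha : StrictMono a) (hapos : ∀ j, 1 ≤ a j)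
    (hreg : ∃ b K : ℝ, 2 < b ∧ b ≤ K ∧ ∀ j,
      b ≤ min (Amu (quot M) (a j) (a (j + 1))) (Bmu (quot M) (a j) (a (j + 1))) ∧
      max (Amu (quot M) (a j) (a (j + 1))) (Bmu (quot M) (a j) (a (j + 1))) ≤ K) :
    ∃ C : ℝ, ∀ j, δ (a (j + 1) + 1) * ((a (j + 1) - a j : ℕ) : ℝ) ≤ C := by
  obtain ⟨b, K, hb2, hbK, hjK⟩ := hreg
  have hK : (0:ℝ) < K := by linarith
  have μpos : ∀ p, 0 < quot M p := fun p => div_pos (hpos p) (hpos (p - 1))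
  have μmono : ∀ p q, 1 ≤ p → p ≤ q → quot M p ≤ quot M q := by
    intro p q hp hpq
    induction q with
    | zero => omega
    | succ n ih =>
      rcases Nat.lt_or_ge p (n+1) with h | h
      · have hn : 1 ≤ n := by omega
        refine le_trans (ih (by omega)) ?_
        have := hlc n hn
        unfold quot
        have hstep : (n+1) - 1 = n := rfl
        rw [hstep, div_le_div_iff₀ (hpos (n-1)) (hpos n)]
        nlinarith [hpos n, hpos (n-1), hpos (n+1)]
      · have : p = n + 1 := by omega
        subst this; exact le_refl _
  refine ⟨Real.log K, fun j => ?_⟩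
  set A := a j with hA
  set B := a (j + 1) with hB
  have hAB : A < B := ha (Nat.lt_succ_self j)
  set n := B - A with hn
  have hApos : 1 ≤ A := hapos j
  -- product bound
  have hcard : (Finset.Icc (A + 1) B).card = n := by
    rw [Nat.card_Icc]; omega
  have hprodle : ∏ i ∈ Finset.Icc (A + 1) B, quot M i ≤ quot M B ^ n := by
    rw [← hcard]
    refine le_trans (Finset.prod_le_prod (fun i _ => le_of_lt (μpos i)) ?_)
      (le_of_eq (Finset.prod_const _))
    intro i hi
    rw [Finset.mem_Icc] at hi
    exact μmono i B (by omega) hi.2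
  have hprodpos : 0 < ∏ i ∈ Finset.Icc (A + 1) B, quot M i :=
    Finset.prod_pos (fun i _ => μpos i)
  have hratio : (quot M (B + 1) / quot M B) ^ n ≤ Amu (quot M) A B := by
    unfold Amu
    rw [div_pow]
    apply div_le_div_of_nonneg_left _ hprodpos hprodle
    exact pow_nonneg (le_of_lt (μpos _)) n
  have hAK : Amu (quot M) A B ≤ K :=
    le_trans (le_max_left _ _) (hjK j).2
  have hxpos : 0 < quot M (B + 1) / quot M B := div_pos (μpos _) (μpos _)
  have hlog : Real.log ((quot M (B + 1) / quot M B) ^ n) ≤ Real.log K :=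
    Real.log_le_log (pow_pos hxpos n) (le_trans hratio hAK)
  have hδval : δ (B + 1) = Real.log (quot M (B + 1) / quot M B) := by
    have := hδ (B + 1) (by omega)
    simpa using this
  calc δ (B + 1) * ((B - A : ℕ) : ℝ)
      = Real.log ((quot M (B + 1) / quot M B) ^ n) := by
        rw [Real.log_pow, hδval, ← hn]; ring
    _ ≤ Real.log K := hlog
end

section
/- Let M ∈ 𝓛𝓒. If a strictly increasing sequence of positive integers (a_j)_{j≥1} satisfies the regularity condition (b) for M (there exist K ≥ b > 2 bounding min and max of A_M(a_j,a_{j+1}) and B_M(a_j,a_{j+1}) for all j), then Σ_{j=1}^∞ 1/(a_{j+1} − a_j) = +∞. -/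
lemma AmuBmu (μ : ℕ → ℝ) (hμ : ∀ p, 0 < μ p) (a b : ℕ) :
    Amu μ a b * Bmu μ a b = (μ (b + 1) / μ (a + 1)) ^ (b - a) := by
  have hP : (0:ℝ) < ∏ i ∈ Finset.Icc (a + 1) b, μ i :=
    Finset.prod_pos fun i _ => hμ i
  rw [Amu, Bmu, div_pow]
  field_simp

set_option maxHeartbeats 1000000 in
theorem stmt16 (M : ℕ → ℝ) (hpos : ∀ j, 0 < M j) (h0 : M 0 = 1) (hnorm : 1 ≤ M 1)
    (hlc : ∀ j : ℕ, 1 ≤ j → (M j) ^ 2 ≤ M (j - 1) * M (j + 1))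
    (hroot : Filter.Tendsto (fun j : ℕ => (M j) ^ (1 / (j : ℝ))) Filter.atTop Filter.atTop)
    (a : ℕ → ℕ) (ha : StrictMono a) (hapos : ∀ j, 1 ≤ a j)
    (hreg : ∃ b K : ℝ, 2 < b ∧ b ≤ K ∧ ∀ j,
      b ≤ min (Amu (quot M) (a j) (a (j + 1))) (Bmu (quot M) (a j) (a (j + 1))) ∧
      max (Amu (quot M) (a j) (a (j + 1))) (Bmu (quot M) (a j) (a (j + 1))) ≤ K) :
    ¬ Summable (fun j : ℕ => 1 / (((a (j + 1) : ℝ)) - (a j : ℝ))) := by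
  obtain ⟨b, K, hb2, hbK, hreg⟩ := hreg
  intro hsum
  set μ := quot M with hμdef
  have hμpos : ∀ p, 0 < μ p := fun p => div_pos (hpos p) (hpos (p - 1))
  -- μ is monotone
  have hstep : ∀ p : ℕ, μ p ≤ μ (p + 1) := by
    intro p
    rcases Nat.eq_zero_or_pos p with rfl | hp
    · have : μ 0 = 1 := by simp [hμdef, quot, h0]
      have h1 : μ 1 = M 1 := by simp [hμdef, quot, h0]
      rw [this, h1]; exact hnorm
    · have h := hlc p hp
      have hP : (quot M p ≤ quot M (p+1)) := by
        rw [quot, quot]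
        simp only [Nat.add_sub_cancel]
        rw [div_le_div_iff₀ (hpos _) (hpos _)]
        nlinarith [hpos p, hpos (p-1), hpos (p+1)]
      exact hP
  have hμmono : Monotone μ := monotone_nat_of_le_succ hstep
  -- M p ≤ μ p ^ p
  have hMle : ∀ p : ℕ, M p ≤ μ p ^ p := by
    intro p
    induction p with
    | zero => simp [h0]
    | succ n ih =>
      have hMn : M (n + 1) = M n * μ (n + 1) := by
        rw [hμdef, quot]
        simp only [Nat.add_sub_cancel]
        rw [mul_comm, div_mul_cancel₀ _ (hpos n).ne']
      rw [hMn]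
      calc M n * μ (n + 1) ≤ μ n ^ n * μ (n + 1) := by
            exact mul_le_mul_of_nonneg_right ih (hμpos _).le
        _ ≤ μ (n + 1) ^ n * μ (n + 1) := by
            exact mul_le_mul_of_nonneg_right
              (pow_le_pow_left₀ (hμpos n).le (hstep n) n) (hμpos _).le
        _ = μ (n + 1) ^ (n + 1) := by ring
  -- μ tends to atTop
  have hμtop : Filter.Tendsto μ Filter.atTop Filter.atTop := by
    apply Filter.tendsto_atTop_mono' _ _ hroot
    filter_upwards [Filter.eventually_ge_atTop 1] with p hp
    have hpne : (p : ℝ) ≠ 0 := Nat.cast_ne_zero.mpr (by omega)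
    calc (M p) ^ (1 / (p : ℝ)) ≤ (μ p ^ p) ^ (1 / (p : ℝ)) :=
          Real.rpow_le_rpow (hpos p).le (hMle p) (by positivity)
      _ = μ p := by
          rw [← Real.rpow_natCast (μ p) p, ← Real.rpow_mul (hμpos p).le,
            mul_one_div, div_self hpne, Real.rpow_one]
  -- log μ (a j + 1) tends to atTop
  have hatop : Filter.Tendsto (fun j => a j + 1) Filter.atTop Filter.atTop :=
    Filter.tendsto_atTop_mono (fun j => Nat.le_succ (a j)) ha.tendsto_atTop
  have hgtop : Filter.Tendsto (fun j => Real.log (μ (a j + 1))) Filter.atTop Filter.atTop :=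
    Real.tendsto_log_atTop.comp (hμtop.comp hatop)
  set g : ℕ → ℝ := fun j => Real.log (μ (a j + 1)) with hgdef
  set f : ℕ → ℝ := fun j => g (j + 1) - g j with hfdef
  have hK1 : (1:ℝ) < K := lt_of_lt_of_le (by linarith) hbK
  -- f j ≤ (2 log K) * (1/(a(j+1) - a j))
  have hfbound : ∀ j, f j ≤ (2 * Real.log K) * (1 / (((a (j + 1) : ℝ)) - (a j : ℝ))) := by
    intro j
    obtain ⟨hmin, hmax⟩ := hreg j
    have hAle : Amu μ (a j) (a (j + 1)) ≤ K := le_trans (le_max_left _ _) hmax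
    have hBle : Bmu μ (a j) (a (j + 1)) ≤ K := le_trans (le_max_right _ _) hmax
    have hApos : 0 < Amu μ (a j) (a (j + 1)) :=
      lt_of_lt_of_le (by linarith) (le_trans hmin (min_le_left _ _))
    have hBpos : 0 < Bmu μ (a j) (a (j + 1)) :=
      lt_of_lt_of_le (by linarith) (le_trans hmin (min_le_right _ _))
    have hprod : (μ (a (j+1) + 1) / μ (a j + 1)) ^ (a (j+1) - a j) ≤ K ^ 2 := by
      rw [← AmuBmu μ hμpos]
      calc Amu μ (a j) (a (j + 1)) * Bmu μ (a j) (a (j + 1)) ≤ K * K :=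
            mul_le_mul hAle hBle hBpos.le (by linarith)
        _ = K ^ 2 := by ring
    set n := a (j + 1) - a j with hndef
    have hn1 : 1 ≤ n := by
      have := ha (show j < j + 1 by omega); omega
    have hr : (0:ℝ) < μ (a (j+1) + 1) / μ (a j + 1) := div_pos (hμpos _) (hμpos _)
    have hlog : (n : ℝ) * Real.log (μ (a (j+1) + 1) / μ (a j + 1)) ≤ 2 * Real.log K := by
      have := Real.log_le_log (by positivity) hprod
      rwa [Real.log_pow, Real.log_pow, Nat.cast_ofNat] at this
    have hcast : ((a (j + 1) : ℝ)) - (a j : ℝ) = (n : ℝ) := by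
      rw [hndef, Nat.cast_sub (ha (Nat.lt_succ_self j)).le]
    have hfj : f j = Real.log (μ (a (j+1) + 1) / μ (a j + 1)) := by
      simp [hfdef, hgdef, Real.log_div (hμpos _).ne' (hμpos _).ne']
    rw [hfj, hcast]
    have hnpos : (0:ℝ) < (n : ℝ) := by exact_mod_cast hn1
    rw [mul_one_div, le_div_iff₀ hnpos, mul_comm]
    exact hlog
  have hfnonneg : ∀ j, 0 ≤ f j := by
    intro j
    have : μ (a j + 1) ≤ μ (a (j + 1) + 1) :=
      hμmono (Nat.succ_le_succ (ha (Nat.lt_succ_self j)).le)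
    exact sub_nonneg.mpr (Real.log_le_log (hμpos _) this)
  have hfsum : Summable f :=
    Summable.of_nonneg_of_le hfnonneg hfbound (hsum.mul_left _)
  -- telescoping: g n - g 0 = ∑_{i<n} f i
  have htel : ∀ n, ∑ i ∈ Finset.range n, f i = g n - g 0 := by
    intro n; exact Finset.sum_range_sub g n
  have hconv : Filter.Tendsto (fun n => g n - g 0) Filter.atTop (nhds (∑' i, f i)) := by
    have := hfsum.hasSum.tendsto_sum_nat
    simpa [htel] using this
  have hgconv : Filter.Tendsto g Filter.atTop (nhds (∑' i, f i + g 0)) := by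
    have := hconv.add_const (g 0)
    simpa using this
  exact (hgconv.not_tendsto (disjoint_nhds_atTop _)) hgtop
end

section
/- Let (a_j)_{j≥1} be a strictly increasing sequence of positive integers with a_{j+1} − a_j ≥ 2 for all j and Σ_{j=1}^∞ 1/(a_{j+1} − a_j) = +∞. Then there exists M ∈ 𝓛𝓒 and constants K ≥ b > 2 such that for all j: b ≤ min{A_M(a_j,a_{j+1}), B_M(a_j,a_{j+1})} ≤ max{A_M(a_j,a_{j+1}), B_M(a_j,a_{j+1})} ≤ K. In particular one may take M given via δ_{a_{j+1}+1} = δ_{a_j+2} := 3/(a_{j+1}−a_j+1) and δ_p := 0 otherwise. -/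
open Finset

namespace Stmt17

noncomputable def dd (a : ℕ → ℕ) (j : ℕ) : ℝ := 3 / ((a (j + 1) : ℝ) - (a j : ℝ) + 1)

noncomputable def g (a : ℕ → ℕ) (j p : ℕ) : ℝ :=
  dd a j * ((if a j + 2 ≤ p then (1 : ℝ) else 0) + (if a (j + 1) + 1 ≤ p then (1 : ℝ) else 0))

noncomputable def S (a : ℕ → ℕ) (p : ℕ) : ℝ := ∑ j ∈ range p, g a j p

noncomputable def T (a : ℕ → ℕ) (p : ℕ) : ℝ := ∑ q ∈ Icc 1 p, S a q

noncomputable def Mdef (a : ℕ → ℕ) (p : ℕ) : ℝ := Real.exp (T a p)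

section

variable {a : ℕ → ℕ} (ha : StrictMono a) (hapos : ∀ j, 1 ≤ a j)
  (hgap : ∀ j, a j + 2 ≤ a (j + 1))

include ha hapos in
lemma haj : ∀ j, j + 1 ≤ a j := by
  intro j
  induction j with
  | zero => exact hapos 0
  | succ n ih => have : a n < a (n + 1) := ha (by omega); omega

include hgap in
lemma gapR (j : ℕ) : (2 : ℝ) ≤ (a (j + 1) : ℝ) - (a j : ℝ) := by
  have := hgap j
  have h1 : (a j : ℝ) + 2 ≤ (a (j + 1) : ℝ) := by exact_mod_cast Nat.cast_le.mpr this
  linarith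

include hgap in
lemma dd_pos (j : ℕ) : 0 < dd a j := by
  have := gapR hgap j
  unfold dd; positivity

include hgap in
lemma g_nonneg (j p : ℕ) : 0 ≤ g a j p := by
  have := (dd_pos hgap j).le
  unfold g
  have h1 : (0:ℝ) ≤ (if a j + 2 ≤ p then (1:ℝ) else 0) := by positivity
  have h2 : (0:ℝ) ≤ (if a (j+1) + 1 ≤ p then (1:ℝ) else 0) := by positivity
  nlinarith

lemma g_mono (hgap : ∀ j, a j + 2 ≤ a (j + 1)) (j : ℕ) : Monotone (g a j) := by
  intro p q hpq
  unfold g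
  have := (dd_pos hgap j).le
  gcongr <;> [skip; skip] <;> split <;> split <;> simp_all <;> omega

include ha hapos in
lemma S_ext {p N : ℕ} (h : p ≤ N) : S a p = ∑ j ∈ range N, g a j p := by
  unfold S
  apply Finset.sum_subset (Finset.range_subset_range.mpr h)
  intro j _ hj
  simp only [Finset.mem_range, not_lt] at hj
  have h1 : ¬ (a j + 2 ≤ p) := by have := haj ha hapos j; omega
  have h2 : ¬ (a (j + 1) + 1 ≤ p) := by have := haj ha hapos (j+1); omega
  simp [g, h1, h2]

include ha hapos hgap in
lemma S_mono : Monotone (S a) := by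
  intro p q hpq
  rw [S_ext ha hapos hpq]
  unfold S
  exact Finset.sum_le_sum fun j _ => g_mono hgap j hpq

include ha hapos hgap in
lemma S_formula {j p : ℕ} (h1 : a j + 1 ≤ p) (h2 : p ≤ a (j + 1) + 1) :
    S a p = S a (a j + 1) + g a j p := by
  have hjp : j < p := by have := haj ha hapos j; omega
  have hle : a j + 1 ≤ p := h1
  rw [S_ext ha hapos (le_refl p), S_ext ha hapos hle]
  have key : ∀ k ∈ range p, k ≠ j → g a k p = g a k (a j + 1) := by
    intro k _ hk
    rcases lt_or_gt_of_ne hk with hlt | hgt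
    · -- k < j : all four indicators true
      have hm1 : a (k + 1) ≤ a j := ha.le_iff_le.mpr (by omega : k + 1 ≤ j)
      have hm2 : a k + 2 ≤ a (k + 1) := hgap k
      have c1 : a k + 2 ≤ a j + 1 := by omega
      have c2 : a (k + 1) + 1 ≤ a j + 1 := by omega
      simp [g, c1, c2, le_trans c1 hle, le_trans c2 hle]
    · -- k > j : all indicators false
      have hm1 : a (j + 1) ≤ a k := ha.le_iff_le.mpr (by omega : j + 1 ≤ k)
      have hm2 : a (j + 1) < a (k + 1) := ha (by omega : j + 1 < k + 1)
      have c1 : ¬ (a k + 2 ≤ p) := by omega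
      have c2 : ¬ (a (k + 1) + 1 ≤ p) := by omega
      have c3 : ¬ (a k + 2 ≤ a j + 1) := by
        have := hgap j; omega
      have c4 : ¬ (a (k + 1) + 1 ≤ a j + 1) := by have := hgap j; omega
      simp [g, c1, c2, c3, c4]
  have hgj : g a j (a j + 1) = 0 := by
    have c1 : ¬ (a j + 2 ≤ a j + 1) := by omega
    have c2 : ¬ (a (j + 1) + 1 ≤ a j + 1) := by have := hgap j; omega
    simp [g, c1, c2]
  rw [← Finset.sum_erase_add _ _ (Finset.mem_range.mpr hjp),
      ← Finset.sum_erase_add (range p) _ (Finset.mem_range.mpr hjp), hgj, add_zero]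
  exact congrArg (· + g a j p) (Finset.sum_congr rfl fun k hk =>
    key k (Finset.mem_of_mem_erase hk) (Finset.ne_of_mem_erase hk))

include ha hapos hgap in
lemma S_mid {j i : ℕ} (h1 : a j + 2 ≤ i) (h2 : i ≤ a (j + 1)) :
    S a i = S a (a j + 1) + dd a j := by
  rw [S_formula ha hapos hgap (j := j) (by omega) (by omega)]
  have c2 : ¬ (a (j + 1) + 1 ≤ i) := by omega
  simp [g, h1, c2]

include ha hapos hgap in
lemma S_top (j : ℕ) : S a (a (j + 1) + 1) = S a (a j + 1) + 2 * dd a j := by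
  rw [S_formula ha hapos hgap (by have := hgap j; omega) le_rfl]
  have c1 : a j + 2 ≤ a (j + 1) + 1 := by have := hgap j; omega
  simp [g, c1]
  ring

include hgap in
lemma S_nonneg (p : ℕ) : 0 ≤ S a p :=
  Finset.sum_nonneg fun j _ => g_nonneg hgap j p

include hgap in
lemma T_nonneg (p : ℕ) : 0 ≤ T a p :=
  Finset.sum_nonneg fun q _ => S_nonneg hgap q

lemma T_succ (p : ℕ) : T a (p + 1) = T a p + S a (p + 1) := by
  unfold T
  exact Finset.sum_Icc_succ_top (by omega) _

lemma quot_Mdef {p : ℕ} (hp : 1 ≤ p) : quot (Mdef a) p = Real.exp (S a p) := by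
  obtain ⟨q, rfl⟩ : ∃ q, p = q + 1 := ⟨p - 1, by omega⟩
  show Mdef a (q + 1) / Mdef a (q + 1 - 1) = _
  have : q + 1 - 1 = q := rfl
  rw [this, Mdef, Mdef, ← Real.exp_sub, T_succ]
  ring_nf

include ha hapos hgap in
lemma S_lower (k : ℕ) : 2 * ∑ j ∈ range k, dd a j ≤ S a (a k + 1) := by
  induction k with
  | zero => simpa using S_nonneg hgap (a 0 + 1)
  | succ n ih =>
      rw [S_top ha hapos hgap n, Finset.sum_range_succ]
      linarith

include ha hapos hgap in
lemma S_tendsto (hdiv : ¬ Summable (fun j : ℕ => 1 / (((a (j + 1) : ℝ)) - (a j : ℝ)))) :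
    Filter.Tendsto (S a) Filter.atTop Filter.atTop := by
  have hdd : ¬ Summable (dd a) := by
    intro hs
    refine hdiv (Summable.of_nonneg_of_le (fun j => ?_) (fun j => ?_) hs)
    · have := gapR hgap j; positivity
    · have h2 := gapR hgap j
      rw [dd, div_le_div_iff₀ (by linarith) (by linarith)]
      nlinarith
  have hten : Filter.Tendsto (fun n => ∑ j ∈ range n, dd a j) Filter.atTop Filter.atTop :=
    (not_summable_iff_tendsto_nat_atTop_of_nonneg (fun j => (dd_pos hgap j).le)).mp hdd
  rw [Filter.tendsto_atTop] at hten ⊢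
  intro C
  obtain ⟨k, hk⟩ := (hten (C / 2)).exists
  refine Filter.eventually_atTop.mpr ⟨a k + 1, fun p hp => ?_⟩
  calc C = 2 * (C / 2) := by ring
  _ ≤ 2 * ∑ j ∈ range k, dd a j := by linarith
  _ ≤ S a (a k + 1) := S_lower ha hapos hgap k
  _ ≤ S a p := S_mono ha hapos hgap hp

include ha hapos hgap in
lemma T_div_tendsto (hdiv : ¬ Summable (fun j : ℕ => 1 / (((a (j + 1) : ℝ)) - (a j : ℝ)))) :
    Filter.Tendsto (fun p : ℕ => T a p / p) Filter.atTop Filter.atTop := by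
  rw [Filter.tendsto_atTop]
  intro C
  set c : ℝ := |C| + 1 with hc
  have hc0 : 0 < c := by positivity
  have hCc : C ≤ c := by rw [hc]; have := le_abs_self C; linarith
  obtain ⟨N, hN⟩ := Filter.eventually_atTop.mp
    ((Filter.tendsto_atTop.mp (S_tendsto ha hapos hgap hdiv)) (2 * c))
  refine Filter.eventually_atTop.mpr ⟨2 * N + 2, fun p hp => ?_⟩
  have hp1 : (1:ℕ) ≤ p := by omega
  have hpR : 0 < (p : ℝ) := by exact_mod_cast Nat.pos_of_ne_zero (by omega)
  rw [le_div_iff₀ hpR]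
  have hsub : Icc (N + 1) p ⊆ Icc 1 p := by
    intro x hx; simp only [Finset.mem_Icc] at *; omega
  have h1 : ∑ q ∈ Icc (N + 1) p, S a q ≤ T a p :=
    Finset.sum_le_sum_of_subset_of_nonneg hsub (fun i _ _ => S_nonneg hgap i)
  have h2 : ∑ q ∈ Icc (N + 1) p, (2 * c) ≤ ∑ q ∈ Icc (N + 1) p, S a q :=
    Finset.sum_le_sum fun q hq => hN q (by simp only [Finset.mem_Icc] at hq; omega)
  have hcard : (Icc (N + 1) p).card = p - N := by rw [Nat.card_Icc]; omega
  have h3 : ∑ q ∈ Icc (N + 1) p, (2 * c) = ((p - N : ℕ) : ℝ) * (2 * c) := by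
    rw [Finset.sum_const, hcard, nsmul_eq_mul]
  have h4 : ((p - N : ℕ) : ℝ) = (p : ℝ) - N := by
    have : N ≤ p := by omega
    push_cast [this]; ring
  have h5 : (p : ℝ) * c ≤ ((p : ℝ) - N) * (2 * c) := by
    have hNp : 2 * (N : ℝ) ≤ (p : ℝ) := by exact_mod_cast (by omega : 2 * N ≤ p)
    nlinarith
  have : C * p ≤ c * p := by nlinarith
  calc C * p ≤ (p : ℝ) * c := by linarith
  _ ≤ ((p : ℝ) - N) * (2 * c) := h5
  _ = ∑ q ∈ Icc (N + 1) p, (2 * c) := by rw [h3, h4]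
  _ ≤ T a p := le_trans h2 h1

include ha hapos hgap in
lemma sum_S_Icc (j : ℕ) :
    ∑ i ∈ Icc (a j + 1) (a (j + 1)), S a i
      = ((a (j + 1) - a j : ℕ) : ℝ) * S a (a j + 1)
        + (((a (j + 1) - a j : ℕ) : ℝ) - 1) * dd a j := by
  set A := a j
  set B := a (j + 1)
  have hAB : A + 2 ≤ B := hgap j
  have hins : Icc (A + 1) B = insert (A + 1) (Icc (A + 2) B) := by
    ext x; simp only [Finset.mem_Icc, Finset.mem_insert]; omega
  rw [hins, Finset.sum_insert (by simp only [Finset.mem_Icc]; omega)]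
  have hmid : ∀ i ∈ Icc (A + 2) B, S a i = S a (A + 1) + dd a j := by
    intro i hi
    simp only [Finset.mem_Icc] at hi
    exact S_mid ha hapos hgap hi.1 hi.2
  rw [Finset.sum_congr rfl hmid, Finset.sum_const, Nat.card_Icc, nsmul_eq_mul]
  have h1 : ((B + 1 - (A + 2) : ℕ) : ℝ) = ((B - A : ℕ) : ℝ) - 1 := by
    have e : B + 1 - (A + 2) = (B - A) - 1 := by omega
    rw [e, Nat.cast_sub (by omega)]
    norm_num
  rw [h1]
  ring

include ha hapos hgap in
lemma gap_bounds (j : ℕ) :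
    Amu (quot (Mdef a)) (a j) (a (j + 1)) = Real.exp 3 ∧
    Real.exp 1 ≤ Bmu (quot (Mdef a)) (a j) (a (j + 1)) ∧
    Bmu (quot (Mdef a)) (a j) (a (j + 1)) ≤ Real.exp 3 := by
  have hAB : a j + 2 ≤ a (j + 1) := hgap j
  have hcast : ((a (j + 1) - a j : ℕ) : ℝ) = (a (j + 1) : ℝ) - (a j : ℝ) :=
    Nat.cast_sub (by omega)
  have hgR : (2 : ℝ) ≤ (a (j + 1) : ℝ) - (a j : ℝ) := gapR hgap j
  have hne : (a (j + 1) : ℝ) - (a j : ℝ) + 1 ≠ 0 := by linarith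
  have hpos : (0 : ℝ) < (a (j + 1) : ℝ) - (a j : ℝ) + 1 := by linarith
  set C := S a (a j + 1) with hC
  have hprod : ∏ i ∈ Icc (a j + 1) (a (j + 1)), quot (Mdef a) i
      = Real.exp (((a (j + 1) - a j : ℕ) : ℝ) * C
          + (((a (j + 1) - a j : ℕ) : ℝ) - 1) * dd a j) := by
    rw [Finset.prod_congr rfl (fun i hi => quot_Mdef (p := i)
      (by simp only [Finset.mem_Icc] at hi; omega)), ← Real.exp_sum,
      sum_S_Icc ha hapos hgap j]
  have hSA1 : quot (Mdef a) (a j + 1) = Real.exp C := quot_Mdef (by omega)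
  have hexpand : ∀ z d : ℝ, z * C + (z - 1) * d - z * C = (z - 1) * d := by
    intro z d; ring
  refine ⟨?_, ?_, ?_⟩
  · rw [Amu, hprod, quot_Mdef (p := a (j + 1) + 1) (by omega), S_top ha hapos hgap j,
      ← Real.exp_nat_mul, ← Real.exp_sub]
    congr 1
    rw [hcast, dd]
    field_simp
    ring
  · rw [Bmu, hprod, hSA1, ← Real.exp_nat_mul, ← Real.exp_sub, Real.exp_le_exp,
      hexpand, hcast, dd]
    rw [show ((a (j + 1) : ℝ) - (a j : ℝ) - 1) * (3 / ((a (j + 1) : ℝ) - (a j : ℝ) + 1))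
        = 3 * ((a (j + 1) : ℝ) - (a j : ℝ) - 1) / ((a (j + 1) : ℝ) - (a j : ℝ) + 1) by ring,
      le_div_iff₀ hpos]
    nlinarith
  · rw [Bmu, hprod, hSA1, ← Real.exp_nat_mul, ← Real.exp_sub, Real.exp_le_exp,
      hexpand, hcast, dd]
    rw [show ((a (j + 1) : ℝ) - (a j : ℝ) - 1) * (3 / ((a (j + 1) : ℝ) - (a j : ℝ) + 1))
        = 3 * ((a (j + 1) : ℝ) - (a j : ℝ) - 1) / ((a (j + 1) : ℝ) - (a j : ℝ) + 1) by ring,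
      div_le_iff₀ hpos]
    nlinarith

end
end Stmt17

theorem stmt17 (a : ℕ → ℕ) (ha : StrictMono a) (hapos : ∀ j, 1 ≤ a j)
    (hgap : ∀ j, a j + 2 ≤ a (j + 1))
    (hdiv : ¬ Summable (fun j : ℕ => 1 / (((a (j + 1) : ℝ)) - (a j : ℝ)))) :
    ∃ M : ℕ → ℝ, (∀ p, 0 < M p) ∧ M 0 = 1 ∧ 1 ≤ M 1 ∧
      (∀ p : ℕ, 1 ≤ p → (M p) ^ 2 ≤ M (p - 1) * M (p + 1)) ∧
      Filter.Tendsto (fun p : ℕ => (M p) ^ (1 / (p : ℝ))) Filter.atTop Filter.atTop ∧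
      ∃ b K : ℝ, 2 < b ∧ b ≤ K ∧ ∀ j,
        b ≤ min (Amu (quot M) (a j) (a (j + 1))) (Bmu (quot M) (a j) (a (j + 1))) ∧
        max (Amu (quot M) (a j) (a (j + 1))) (Bmu (quot M) (a j) (a (j + 1))) ≤ K := by
  refine ⟨Stmt17.Mdef a, fun p => Real.exp_pos _, ?_, ?_, ?_, ?_, ?_⟩
  · simp [Stmt17.Mdef, Stmt17.T]
  · exact Real.one_le_exp (Stmt17.T_nonneg hgap 1)
  · intro p hp
    obtain ⟨q, rfl⟩ : ∃ q, p = q + 1 := ⟨p - 1, by omega⟩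
    show Real.exp _ ^ 2 ≤ Real.exp _ * Real.exp _
    rw [sq, ← Real.exp_add, ← Real.exp_add, Real.exp_le_exp]
    have e1 : Stmt17.T a (q + 1) = Stmt17.T a q + Stmt17.S a (q + 1) := Stmt17.T_succ q
    have e2 : Stmt17.T a (q + 2) = Stmt17.T a (q + 1) + Stmt17.S a (q + 2) := Stmt17.T_succ (q + 1)
    have e3 : q + 1 - 1 = q := rfl
    have hm : Stmt17.S a (q + 1) ≤ Stmt17.S a (q + 2) :=
      Stmt17.S_mono ha hapos hgap (by omega)
    rw [e3]
    linarith
  · have hT := Stmt17.T_div_tendsto ha hapos hgap hdiv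
    refine (Real.tendsto_exp_atTop.comp hT).congr fun p => ?_
    show Real.exp (Stmt17.T a p / p) = Stmt17.Mdef a p ^ (1 / (p : ℝ))
    rw [Stmt17.Mdef, Real.rpow_def_of_pos (Real.exp_pos _), Real.log_exp, mul_one_div]
  · refine ⟨Real.exp 1, Real.exp 3, ?_, Real.exp_le_exp.mpr (by norm_num), fun j => ?_⟩
    · have := Real.exp_one_gt_d9; linarith
    · obtain ⟨h1, h2, h3⟩ := Stmt17.gap_bounds ha hapos hgap j
      refine ⟨le_min (by rw [h1]; exact Real.exp_le_exp.mpr (by norm_num)) h2,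
        max_le (le_of_eq h1) h3⟩
end

section
/- There does not exist M ∈ 𝓛𝓒 such that ω_M is equivalent to t ↦ log(1+t), i.e., such that both ω_M(t) = O(log(1+t)) and log(1+t) = O(ω_M(t)) as t → ∞. Indeed, if ω_M(t) ≤ C·log(1+t) + C for some C ≥ 1 and all t ≥ 0, then M_p = +∞ (i.e., sup_{t>0} t^p·exp(−ω_M(t)) is infinite) for all p > C, contradicting M_p ∈ ℝ. -/
noncomputable def omegaF (M : ℕ → ℝ) (t : ℝ) : ℝ := ⨆ p : ℕ, Real.log (t ^ p / M p)

theorem stmt18 :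
    ¬ ∃ M : ℕ → ℝ, (∀ p, 0 < M p) ∧ M 0 = 1 ∧ 1 ≤ M 1 ∧
      (∀ p : ℕ, 1 ≤ p → (M p) ^ 2 ≤ M (p - 1) * M (p + 1)) ∧
      Filter.Tendsto (fun p : ℕ => (M p) ^ (1 / (p : ℝ))) Filter.atTop Filter.atTop ∧
      (∃ C : ℝ, 1 ≤ C ∧ ∀ t : ℝ, 0 ≤ t → omegaF M t ≤ C * Real.log (1 + t) + C) ∧
      (∃ C : ℝ, 1 ≤ C ∧ ∀ t : ℝ, 0 ≤ t → Real.log (1 + t) ≤ C * omegaF M t + C) := by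
  rintro ⟨M, hMpos, -, -, -, -, ⟨C, hC1, hC⟩, ⟨D, hD1, hD⟩⟩
  by_cases hbdd : ∃ t₀ : ℝ, 0 < t₀ ∧ ¬ BddAbove (Set.range fun p : ℕ => Real.log (t₀ ^ p / M p))
  · -- unbounded case: junk value 0 for all t ≥ t₀
    obtain ⟨t₀, ht₀, hub⟩ := hbdd
    set t : ℝ := max t₀ (Real.exp D) + 1 with htdef
    have ht0 : 0 < t := by positivity
    have htt₀ : t₀ ≤ t := le_trans (le_max_left _ _) (by linarith)
    have hub' : ¬ BddAbove (Set.range fun p : ℕ => Real.log (t ^ p / M p)) := by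
      rintro ⟨b, hb⟩
      apply hub
      refine ⟨b, ?_⟩
      rintro x ⟨p, rfl⟩
      refine le_trans ?_ (hb ⟨p, rfl⟩)
      have hMp := hMpos p
      have h1 : (0:ℝ) < t₀ ^ p / M p := by positivity
      apply Real.log_le_log h1
      exact (div_le_div_iff_of_pos_right hMp).mpr (pow_le_pow_left₀ ht₀.le htt₀ p)
    have hzero : omegaF M t = 0 := Real.iSup_of_not_bddAbove hub'
    have := hD t (le_of_lt ht0)
    rw [hzero] at this
    have hlog : D < Real.log (1 + t) := by
      rw [← Real.log_exp D]
      apply Real.log_lt_log (Real.exp_pos D)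
      have := le_max_right t₀ (Real.exp D)
      linarith
    linarith
  · push_neg at hbdd
    set p : ℕ := ⌈C⌉₊ + 1 with hpdef
    have hp : C + 1 ≤ (p : ℝ) := by
      have := Nat.le_ceil C
      rw [hpdef]
      push_cast
      linarith
    set K : ℝ := M p * Real.exp C * 2 ^ (C : ℝ) with hKdef
    have hMp := hMpos p
    have hK0 : 0 < K := by positivity
    set t : ℝ := max 1 K + 1 with htdef
    have ht1 : (1:ℝ) ≤ t := by
      have := le_max_left 1 K
      simp only [htdef]; linarith
    have ht0 : (0:ℝ) < t := by linarith
    have htK : K < t := by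
      have := le_max_right 1 K
      simp only [htdef]; linarith
    have hB := hbdd t ht0
    have h1 : Real.log (t ^ p / M p) ≤ C * Real.log (1 + t) + C :=
      le_trans (le_ciSup hB p) (hC t (le_of_lt ht0))
    have hpos : (0:ℝ) < t ^ p / M p := by positivity
    have h2 : t ^ p / M p ≤ Real.exp (C * Real.log (1 + t) + C) := by
      have := Real.exp_le_exp.mpr h1
      rwa [Real.exp_log hpos] at this
    have h3 : Real.exp (C * Real.log (1 + t) + C) = (1 + t) ^ (C : ℝ) * Real.exp C := by
      rw [Real.exp_add, Real.rpow_def_of_pos (by linarith), mul_comm (Real.log (1+t)) C]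
    have h4 : t ^ p ≤ M p * ((1 + t) ^ (C : ℝ) * Real.exp C) := by
      rw [div_le_iff₀ (hMpos p)] at h2
      rw [h3] at h2
      linarith [h2]
    have h5 : (1 + t) ^ (C : ℝ) ≤ 2 ^ (C : ℝ) * t ^ (C : ℝ) := by
      rw [← Real.mul_rpow (by norm_num) (le_of_lt ht0)]
      exact Real.rpow_le_rpow (by linarith) (by linarith) (by linarith)
    have h6 : t ^ (C + 1) ≤ t ^ (p : ℝ) := Real.rpow_le_rpow_of_exponent_le ht1 hp
    have h7 : t ^ (p : ℝ) = t ^ p := Real.rpow_natCast t p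
    have h8 : t ^ (C + 1) = t ^ (C : ℝ) * t := by
      rw [Real.rpow_add ht0, Real.rpow_one]
    have htC : 0 < t ^ (C : ℝ) := Real.rpow_pos_of_pos ht0 C
    have hexp : 0 < Real.exp C := Real.exp_pos C
    -- combine: t^C * t ≤ t^p ≤ M p * ((1+t)^C * exp C) ≤ K * t^C
    have h9 : t ^ (C : ℝ) * t ≤ K * t ^ (C : ℝ) := by
      rw [← h8]
      refine le_trans h6 ?_
      rw [h7]
      refine le_trans h4 ?_
      have : M p * ((1 + t) ^ (C : ℝ) * Real.exp C) ≤
          M p * ((2 ^ (C : ℝ) * t ^ (C : ℝ)) * Real.exp C) := by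
        have hMp := (hMpos p).le
        gcongr
      refine le_trans this (le_of_eq ?_)
      rw [hKdef]; ring
    nlinarith [h9, htC, htK]
end

section
/- Let M ∈ 𝓛𝓒, c > 0, and for k > μ_1 − 1 let r_{k} ∈ [0, 1/c) be the global maximum point of r ↦ r^k·exp(−ω_M(1/(1−cr))). For p ≥ 1 set k_p := p(μ_{p+1} − 1) (assuming μ_2 > 1). Then r_{k_p} = k_p/(c(k_p + p)) = 1/c − 1/(c·μ_{p+1}), and consequently exp(−ω_M(1/(1−c·r_{k_p}))) = M_{p+1}/(μ_{p+1})^{p+1}. -/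
private lemma chain_up {g : ℕ → ℝ} {n : ℕ} (h : ∀ q, q < n → g q ≤ g (q + 1)) :
    ∀ q, q ≤ n → g q ≤ g n := by
  have hm : Monotone fun q => g (min q n) := by
    apply monotone_nat_of_le_succ
    intro q
    rcases lt_or_ge q n with h' | h'
    · rw [min_eq_left h'.le, min_eq_left (Nat.succ_le_of_lt h')]
      exact h q h'
    · rw [min_eq_right h', min_eq_right (h'.trans (Nat.le_succ q))]
  intro q hq
  have h2 := hm hq
  simpa [min_eq_left hq, min_self] using h2

private lemma chain_down {g : ℕ → ℝ} {n : ℕ} (h : ∀ q, n ≤ q → g (q + 1) ≤ g q) :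
    ∀ q, n ≤ q → g q ≤ g n := by
  have hm : Antitone fun q => g (max q n) := by
    apply antitone_nat_of_succ_le
    intro q
    rcases le_or_gt n q with h' | h'
    · rw [max_eq_left h', max_eq_left (h'.trans (Nat.le_succ q))]
      exact h q h'
    · rw [max_eq_right h'.le, max_eq_right (Nat.succ_le_of_lt h')]
  intro q hq
  have h2 := hm hq
  simpa [max_eq_left hq, max_self] using h2

theorem stmt19 (M : ℕ → ℝ) (hpos : ∀ j, 0 < M j) (h0 : M 0 = 1) (hnorm : 1 ≤ M 1)
    (hlc : ∀ j : ℕ, 1 ≤ j → (M j) ^ 2 ≤ M (j - 1) * M (j + 1))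
    (hμtend : Filter.Tendsto (fun j : ℕ => M j / M (j - 1)) Filter.atTop Filter.atTop)
    (hμ2 : 1 < M 2 / M 1) (c : ℝ) (hc : 0 < c) (p : ℕ) (hp : 1 ≤ p) :
    let kp : ℝ := (p : ℝ) * (quot M (p + 1) - 1)
    let rp : ℝ := 1 / c - 1 / (c * quot M (p + 1))
    rp = kp / (c * (kp + p)) ∧
    (∀ x : ℝ, 0 ≤ x → x < 1 / c →
      x ^ kp * Real.exp (-(omegaF M (1 / (1 - c * x)))) ≤
        rp ^ kp * Real.exp (-(omegaF M (1 / (1 - c * rp))))) ∧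
    Real.exp (-(omegaF M (1 / (1 - c * rp)))) = M (p + 1) / (quot M (p + 1)) ^ (p + 1) := by
  intro kp rp
  have hkp : kp = (p : ℝ) * (quot M (p + 1) - 1) := rfl
  have hrp : rp = 1 / c - 1 / (c * quot M (p + 1)) := rfl
  clear_value kp rp
  obtain ⟨t, ht⟩ : ∃ t, t = quot M (p + 1) := ⟨_, rfl⟩
  rw [← ht] at hkp hrp ⊢
  have hquotpos : ∀ j, 0 < quot M j := fun j => div_pos (hpos j) (hpos _)
  have ht' : t = M (p + 1) / M p := by rw [ht]; simp [quot]
  have htpos : 0 < t := by rw [ht]; exact hquotpos _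
  have hmono : ∀ i j, 1 ≤ i → i ≤ j → quot M i ≤ quot M j := by
    have step : ∀ j, 1 ≤ j → quot M j ≤ quot M (j + 1) := by
      intro j hj
      have h := hlc j hj
      unfold quot
      rw [Nat.add_sub_cancel]
      rw [div_le_div_iff₀ (hpos _) (hpos _)]
      nlinarith [hpos (j - 1), hpos j, hpos (j + 1)]
    intro i j hi hij
    induction j, hij using Nat.le_induction with
    | base => exact le_rfl
    | succ n hn ih => exact ih.trans (step n (hi.trans hn))
  have ht1 : 1 < t := by
    have h2 : quot M 2 ≤ quot M (p + 1) := hmono 2 (p + 1) (by norm_num) (by omega)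
    have h2' : quot M 2 = M 2 / M 1 := by norm_num [quot]
    rw [ht]
    rw [h2'] at h2
    linarith
  have hcne : c ≠ 0 := ne_of_gt hc
  have htne : t ≠ 0 := ne_of_gt htpos
  have hpne : (p : ℝ) ≠ 0 := Nat.cast_ne_zero.mpr (by omega)
  have hppos : (0 : ℝ) < p := Nat.cast_pos.mpr (by omega)
  have hkpos : 0 < kp := by rw [hkp]; nlinarith
  have hKpos : (0 : ℝ) < kp + p := by linarith
  have hKne : kp + (p : ℝ) ≠ 0 := ne_of_gt hKpos
  have part1 : rp = kp / (c * (kp + p)) := by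
    rw [hrp, hkp]
    have e1 : (p : ℝ) * (t - 1) + p = p * t := by ring
    rw [e1]
    field_simp [hcne, htne, hpne]
  -- basic facts about rp
  have h1crp : 1 - c * rp = 1 / t := by
    rw [hrp]
    field_simp [hcne, htne]
    ring
  have h1crpos : 0 < 1 - c * rp := by rw [h1crp]; positivity
  have hsrp : 1 / (1 - c * rp) = t := by rw [h1crp, one_div_one_div]
  have hrppos : 0 < rp := by
    rw [hrp]
    have h1 : 1 / (c * t) < 1 / c := by
      rw [div_lt_div_iff₀ (by positivity) hc]
      nlinarith
    linarith
  -- omega at t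
  have gstep : ∀ (s : ℝ) (q : ℕ), s ^ (q + 1) / M (q + 1) = s ^ q / M q * (s / quot M (q + 1)) := by
    intro s q
    simp only [quot, Nat.add_sub_cancel]
    rw [pow_succ]
    field_simp [(hpos q).ne', (hpos (q + 1)).ne']
  have hgpos : ∀ q, 0 < t ^ q / M q := fun q => div_pos (pow_pos htpos q) (hpos q)
  have hup : ∀ q, q < p + 1 → t ^ q / M q ≤ t ^ (q + 1) / M (q + 1) := by
    intro q hq
    rw [gstep]
    apply le_mul_of_one_le_right (hgpos q).le
    rw [le_div_iff₀ (hquotpos _), one_mul]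
    exact le_of_le_of_eq (hmono (q + 1) (p + 1) (by omega) (by omega)) ht.symm
  have hdown : ∀ q, p + 1 ≤ q → t ^ (q + 1) / M (q + 1) ≤ t ^ q / M q := by
    intro q hq
    rw [gstep]
    apply mul_le_of_le_one_right (hgpos q).le
    rw [div_le_one (hquotpos _)]
    exact le_of_eq_of_le ht (hmono (p + 1) (q + 1) (by omega) (by omega))
  have hA : ∀ q, t ^ q / M q ≤ t ^ (p + 1) / M (p + 1) := by
    intro q
    rcases le_or_gt q (p + 1) with h | h
    · exact chain_up (g := fun q => t ^ q / M q) hup q h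
    · exact chain_down (g := fun q => t ^ q / M q) hdown q h.le
  have hbddt : BddAbove (Set.range fun q : ℕ => Real.log (t ^ q / M q)) := by
    refine ⟨Real.log (t ^ (p + 1) / M (p + 1)), ?_⟩
    rintro y ⟨q, rfl⟩
    exact Real.log_le_log (hgpos q) (hA q)
  have homt : omegaF M t = Real.log (t ^ (p + 1) / M (p + 1)) := by
    apply le_antisymm
    · exact ciSup_le fun q => Real.log_le_log (hgpos q) (hA q)
    · exact le_ciSup hbddt (p + 1)
  have h3 : Real.exp (-(omegaF M (1 / (1 - c * rp)))) = M (p + 1) / t ^ (p + 1) := by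
    rw [hsrp, homt, Real.exp_neg, Real.exp_log (hgpos (p + 1)), inv_div]
  refine ⟨part1, ?_, h3⟩
  -- part 2
  intro x hx0 hxlt
  have hcx1 : c * x < 1 := by
    have h' := (lt_div_iff₀ hc).mp hxlt
    linarith [h']
  have h1cx : 0 < 1 - c * x := by linarith
  obtain ⟨s, hs⟩ : ∃ s, s = 1 / (1 - c * x) := ⟨_, rfl⟩
  rw [← hs]
  have hspos : 0 < s := by rw [hs]; positivity
  have hμtend' : Filter.Tendsto (quot M) Filter.atTop Filter.atTop := hμtend
  obtain ⟨N, hN⟩ := Filter.eventually_atTop.mp (hμtend'.eventually_ge_atTop s)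
  have hgSpos : ∀ q, 0 < s ^ q / M q := fun q => div_pos (pow_pos hspos q) (hpos q)
  have hdownS : ∀ q, N ≤ q → s ^ (q + 1) / M (q + 1) ≤ s ^ q / M q := by
    intro q hq
    rw [gstep]
    apply mul_le_of_le_one_right (hgSpos q).le
    rw [div_le_one (hquotpos _)]
    exact hN (q + 1) (by omega)
  have htail : ∀ q, N ≤ q → s ^ q / M q ≤ s ^ N / M N := chain_down (g := fun q => s ^ q / M q) hdownS
  have hB : ∀ q, s ^ q / M q ≤ (Finset.range (N + 1)).sup' Finset.nonempty_range_add_one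
      (fun q => s ^ q / M q) := by
    intro q
    rcases le_or_gt q N with h | h
    · exact Finset.le_sup' (fun q => s ^ q / M q) (Finset.mem_range.mpr (by omega))
    · exact (htail q h.le).trans
        (Finset.le_sup' (fun q => s ^ q / M q) (Finset.mem_range.mpr (by omega)))
  have hbddS : BddAbove (Set.range fun q : ℕ => Real.log (s ^ q / M q)) := by
    refine ⟨Real.log ((Finset.range (N + 1)).sup' Finset.nonempty_range_add_one
      (fun q => s ^ q / M q)), ?_⟩
    rintro y ⟨q, rfl⟩
    exact Real.log_le_log (hgSpos q) (hB q)
  have hgeS : Real.log (s ^ p / M p) ≤ omegaF M s := le_ciSup hbddS p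
  have hexpS : Real.exp (-(omegaF M s)) ≤ M p * (1 - c * x) ^ p := by
    have h2 : Real.exp (-(Real.log (s ^ p / M p))) = M p / s ^ p := by
      rw [Real.exp_neg, Real.exp_log (hgSpos p), inv_div]
    have h1 : Real.exp (-(omegaF M s)) ≤ Real.exp (-(Real.log (s ^ p / M p))) :=
      Real.exp_le_exp.mpr (by linarith)
    rw [h2] at h1
    have hsval : M p / s ^ p = M p * (1 - c * x) ^ p := by
      rw [hs]
      field_simp
      rw [one_div_pow, mul_assoc, one_div_mul_cancel (pow_ne_zero _ h1cx.ne'), mul_one]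
    linarith
  -- AM-GM: x^kp * (1-cx)^p ≤ rp^kp * (1-c rp)^p
  have hcrp : c * rp = kp / (kp + p) := by
    rw [part1]
    field_simp
  have h1crp' : 1 - c * rp = (p : ℝ) / (kp + p) := by
    rw [hcrp]
    field_simp
    ring
  have hz1 : (0 : ℝ) ≤ x / rp := div_nonneg hx0 hrppos.le
  have hz2 : (0 : ℝ) ≤ (1 - c * x) / (1 - c * rp) := div_nonneg h1cx.le h1crpos.le
  have hw1 : (0 : ℝ) ≤ kp / (kp + p) := by positivity
  have hw2 : (0 : ℝ) ≤ (p : ℝ) / (kp + p) := by positivity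
  have hwsum : kp / (kp + p) + (p : ℝ) / (kp + p) = 1 := by field_simp
  have hgm := Real.geom_mean_le_arith_mean2_weighted hw1 hw2 hz1 hz2 hwsum
  have hsum : kp / (kp + p) * (x / rp) + (p : ℝ) / (kp + p) * ((1 - c * x) / (1 - c * rp)) = 1 := by
    rw [← hcrp, ← h1crp']
    field_simp
    ring
  rw [hsum] at hgm
  have hpow : ((x / rp) ^ (kp / (kp + p)) * ((1 - c * x) / (1 - c * rp)) ^ ((p : ℝ) / (kp + p)))
      ^ (kp + (p : ℝ)) ≤ 1 := by
    have h1 : (0 : ℝ) ≤ (x / rp) ^ (kp / (kp + p)) * ((1 - c * x) / (1 - c * rp)) ^ ((p : ℝ) / (kp + p)) := by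
      apply mul_nonneg <;> exact Real.rpow_nonneg (by assumption) _
    exact Real.rpow_le_one h1 hgm hKpos.le
  have hexpand : ((x / rp) ^ (kp / (kp + p)) * ((1 - c * x) / (1 - c * rp)) ^ ((p : ℝ) / (kp + p)))
      ^ (kp + (p : ℝ)) = (x / rp) ^ kp * ((1 - c * x) / (1 - c * rp)) ^ p := by
    rw [Real.mul_rpow (Real.rpow_nonneg hz1 _) (Real.rpow_nonneg hz2 _)]
    rw [← Real.rpow_mul hz1, ← Real.rpow_mul hz2]
    rw [div_mul_cancel₀ _ hKne, div_mul_cancel₀ _ hKne]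
    rw [Real.rpow_natCast]
  rw [hexpand] at hpow
  rw [Real.div_rpow hx0 hrppos.le, div_pow, div_mul_div_comm,
    div_le_one (by positivity)] at hpow
  -- combine everything
  have hMrec : M (p + 1) = M p * t := by rw [ht']; field_simp [(hpos p).ne']
  have hMt : M (p + 1) / t ^ (p + 1) = M p * (1 - c * rp) ^ p := by
    rw [hMrec, h1crp, pow_succ, one_div, inv_pow]
    field_simp
  calc x ^ kp * Real.exp (-(omegaF M s))
      ≤ x ^ kp * (M p * (1 - c * x) ^ p) :=
        mul_le_mul_of_nonneg_left hexpS (Real.rpow_nonneg hx0 kp)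
    _ = M p * (x ^ kp * (1 - c * x) ^ p) := by ring
    _ ≤ M p * (rp ^ kp * (1 - c * rp) ^ p) := mul_le_mul_of_nonneg_left hpow (hpos p).le
    _ = rp ^ kp * (M p * (1 - c * rp) ^ p) := by ring
    _ = rp ^ kp * (M (p + 1) / t ^ (p + 1)) := by rw [hMt]
    _ = rp ^ kp * Real.exp (-(omegaF M (1 / (1 - c * rp)))) := by rw [h3]
end
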